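/- arXiv:2009.11628 — 10 statements merged into one kernel-verified Lean document; each statement's English description precedes it below -/
import Mathlib

section
/- Let V be a vector space over ℝ and let a, a', b, b' ∈ V with a ≠ a' and b ≠ b'. Then there exists t ∈ [0,1] with (1−t)•a + t•b = (1−t)•a' + t•b' if and only if there exists λ < 0 such that b − b' = λ•(a − a'). -/
/-! The difference of the two paths sweeps the segment from `a - a'` to `b - b'`, and a segment
between nonzero vectors contains `0` exactly when its endpoints point in opposite directions,
i.e. `-(a - a')` and `b - b'` lie on the same ray. -/

open Set

section Segment

variable {𝕜 E : Type*} [AddCommGroup E]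

theorem exists_smul_add_smul_eq_iff_zero_mem_segment_sub [Ring 𝕜] [PartialOrder 𝕜]
    [AddRightMono 𝕜] [Module 𝕜 E] (a a' b b' : E) :
    (∃ t ∈ Icc (0 : 𝕜) 1, (1 - t) • a + t • b = (1 - t) • a' + t • b') ↔
      (0 : E) ∈ segment 𝕜 (a - a') (b - b') := by
  rw [segment_eq_image, mem_image]
  refine exists_congr fun t => and_congr_right fun _ => ?_
  rw [← sub_eq_zero, smul_sub, smul_sub, sub_add_sub_comm]

theorem zero_mem_segment_iff_exists_neg_smul [Field 𝕜] [LinearOrder 𝕜] [IsStrictOrderedRing 𝕜]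
    [Module 𝕜 E] {x y : E} (hx : x ≠ 0) (hy : y ≠ 0) :
    (0 : E) ∈ segment 𝕜 x y ↔ ∃ l : 𝕜, l < 0 ∧ y = l • x := by
  rw [mem_segment_iff_sameRay, zero_sub, sub_zero,
    ← exists_pos_left_iff_sameRay (neg_ne_zero.2 hx) hy]
  constructor
  · rintro ⟨r, hr, rfl⟩
    exact ⟨-r, neg_neg_of_pos hr, by rw [smul_neg, neg_smul]⟩
  · rintro ⟨l, hl, rfl⟩
    exact ⟨-l, neg_pos_of_neg hl, neg_smul_neg l x⟩

end Segment

/-- Two linear paths `t ↦ (1-t)•a + t•b` and `t ↦ (1-t)•a' + t•b'` between distinct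
endpoints collide at some `t ∈ [0,1]` iff `b - b'` is a negative multiple of `a - a'`. -/
theorem collide_iff_neg_multiple {V : Type*} [AddCommGroup V] [Module ℝ V]
    (a a' b b' : V) (ha : a ≠ a') (hb : b ≠ b') :
    (∃ t ∈ Set.Icc (0 : ℝ) 1, (1 - t) • a + t • b = (1 - t) • a' + t • b') ↔
    ∃ l : ℝ, l < 0 ∧ b - b' = l • (a - a') := by
  rw [exists_smul_add_smul_eq_iff_zero_mem_segment_sub,
    zero_mem_segment_iff_exists_neg_smul (sub_ne_zero.2 ha) (sub_ne_zero.2 hb)]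
end

section
/- Let E be a real inner product space (e.g. EuclideanSpace ℝ (Fin n)), let a, b, q ∈ E with q ∈ openSegment ℝ a b, and let f : ℝ → E be continuous on [0,1] with f 0 = a, f 1 = b, and f t ≠ q for all t ∈ [0,1]. Then eVariationOn f (Set.Icc 0 1) > ENNReal.ofReal (dist a b). -/
/-!
Follow the distance to `a` along the path: it runs from `0` to `dist a b`, so at some time `t`
the point `f t` is exactly as far from `a` as `q`. A point of the segment `[a, b]` is determined
by its distance to `a`, so `f t ∉ [a, b]`, and by strict convexity the triangle inequality through
`f t` is strict. The length of the path is at least `dist a (f t) + dist (f t) b`.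
-/

open Set

theorem eVariationOn.edist_add_edist_le {α E : Type*} [LinearOrder α] [PseudoEMetricSpace E]
    (f : α → E) {s : Set α} {x y z : α} (hx : x ∈ s) (hy : y ∈ s) (hz : z ∈ s)
    (hxy : x ≤ y) (hyz : y ≤ z) :
    edist (f x) (f y) + edist (f y) (f z) ≤ eVariationOn f s :=
  calc edist (f x) (f y) + edist (f y) (f z)
      ≤ eVariationOn f (s ∩ Icc x y) + eVariationOn f (s ∩ Icc y z) :=
        add_le_add (eVariationOn.edist_le f ⟨hx, le_rfl, hxy⟩ ⟨hy, hxy, le_rfl⟩)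
          (eVariationOn.edist_le f ⟨hy, le_rfl, hyz⟩ ⟨hz, hyz, le_rfl⟩)
    _ = eVariationOn f (s ∩ Icc x z) := eVariationOn.Icc_add_Icc f hxy hyz hy
    _ ≤ eVariationOn f s := eVariationOn.mono f inter_subset_left

section NormedAddTorsor

variable {V P : Type*} [NormedAddCommGroup V] [NormedSpace ℝ V] [MetricSpace P]
  [NormedAddTorsor V P] {a b : P}

theorem Wbtw.eq_of_dist_left_eq {x y : P} (hx : Wbtw ℝ a x b) (hy : Wbtw ℝ a y b)
    (h : dist a x = dist a y) : x = y := by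
  obtain ⟨r, ⟨hr₀, -⟩, rfl⟩ := hx
  obtain ⟨s, ⟨hs₀, -⟩, rfl⟩ := hy
  rcases eq_or_ne a b with rfl | hab
  · simp
  rw [dist_left_lineMap, dist_left_lineMap, Real.norm_of_nonneg hr₀, Real.norm_of_nonneg hs₀,
    mul_left_inj' (dist_ne_zero.mpr hab)] at h
  rw [h]

theorem exists_not_wbtw_of_continuousOn {q : P} (hq : Wbtw ℝ a q b) {f : ℝ → P} {s u : ℝ}
    (hsu : s ≤ u) (hf : ContinuousOn f (Icc s u)) (hs : f s = a) (hu : f u = b)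
    (hne : ∀ t ∈ Icc s u, f t ≠ q) :
    ∃ t ∈ Icc s u, ¬ Wbtw ℝ a (f t) b := by
  have hdist : dist a q ∈ Icc (dist a (f s)) (dist a (f u)) := by
    rw [hs, hu, dist_self, ← hq.dist_add_dist]
    exact ⟨dist_nonneg, le_add_of_nonneg_right dist_nonneg⟩
  obtain ⟨t, ht, hft⟩ :=
    intermediate_value_Icc hsu ((continuous_const.dist continuous_id).comp_continuousOn hf) hdist
  exact ⟨t, ht, fun hwbtw ↦ hne t ht (hwbtw.eq_of_dist_left_eq hq hft)⟩

end NormedAddTorsor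

/-- If `q` lies strictly between `a` and `b` in a real inner product space, then any path
from `a` to `b` avoiding `q` has length strictly greater than `dist a b`. -/
theorem length_gt_dist_of_avoids_point_in_openSegment
    {E : Type*} [NormedAddCommGroup E] [InnerProductSpace ℝ E]
    (a b q : E) (hq : q ∈ openSegment ℝ a b)
    (f : ℝ → E) (hf : ContinuousOn f (Set.Icc 0 1))
    (h0 : f 0 = a) (h1 : f 1 = b)
    (hne : ∀ t ∈ Set.Icc (0 : ℝ) 1, f t ≠ q) :
    ENNReal.ofReal (dist a b) < eVariationOn f (Set.Icc 0 1) := by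
  have hq' : Wbtw ℝ a q b := mem_segment_iff_wbtw.mp (openSegment_subset_segment ℝ a b hq)
  obtain ⟨t, ht, hnot⟩ := exists_not_wbtw_of_continuousOn hq' zero_le_one hf h0 h1 hne
  calc ENNReal.ofReal (dist a b)
      < ENNReal.ofReal (dist a (f t) + dist (f t) b) :=
        (ENNReal.ofReal_lt_ofReal_iff_of_nonneg dist_nonneg).mpr
          (dist_lt_dist_add_dist_iff.mpr hnot)
    _ = edist (f 0) (f t) + edist (f t) (f 1) := by
        rw [ENNReal.ofReal_add dist_nonneg dist_nonneg, h0, h1, edist_dist, edist_dist]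
    _ ≤ eVariationOn f (Set.Icc 0 1) :=
        eVariationOn.edist_add_edist_le f (left_mem_Icc.mpr zero_le_one) ht
          (right_mem_Icc.mpr zero_le_one) ht.1 ht.2
end

section
/- Let E = EuclideanSpace ℝ (Fin n), let Q ⊆ E be any subset, and let a, b ∈ E with a ∉ Q and b ∉ Q. Then there exists f : ℝ → E, continuous on [0,1], with f 0 = a, f 1 = b, f t ∉ Q for all t ∈ [0,1], and eVariationOn f (Set.Icc 0 1) = ENNReal.ofReal (dist a b), if and only if Q ∩ openSegment ℝ a b = ∅. -/
open Set

/-- In `ℝⁿ ∖ Q`, the points `a, b ∉ Q` are joined by a geodesic (a path avoiding `Q`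
whose length equals `dist a b`) iff no point of `Q` lies strictly between `a` and `b`. -/
theorem exists_geodesic_avoiding_iff {n : ℕ} (Q : Set (EuclideanSpace ℝ (Fin n)))
    (a b : EuclideanSpace ℝ (Fin n)) (ha : a ∉ Q) (hb : b ∉ Q) :
    (∃ f : ℝ → EuclideanSpace ℝ (Fin n),
      ContinuousOn f (Set.Icc 0 1) ∧ f 0 = a ∧ f 1 = b ∧
      (∀ t ∈ Set.Icc (0 : ℝ) 1, f t ∉ Q) ∧
      eVariationOn f (Set.Icc 0 1) = ENNReal.ofReal (dist a b)) ↔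
    Q ∩ openSegment ℝ a b = ∅ := by
  constructor
  · rintro ⟨f, hfc, hf0, hf1, hfQ, hvar⟩
    rw [Set.eq_empty_iff_forall_notMem]
    rintro q ⟨hqQ, hq⟩
    have hab : a ≠ b := by
      rintro rfl
      rw [openSegment_same] at hq
      exact ha (hq ▸ hqQ)
    rw [openSegment_eq_image' ℝ a b] at hq
    obtain ⟨s, hs, rfl⟩ := hq
    have hvne : ‖b - a‖ ≠ 0 := by
      simpa [sub_eq_zero] using fun h => hab h.symm
    -- key: every point of the path satisfies the triangle equality
    have key : ∀ t ∈ Icc (0 : ℝ) 1, dist a (f t) + dist (f t) b = dist a b := by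
      intro t ht
      have h0m : (0 : ℝ) ∈ Icc (0 : ℝ) 1 ∩ Icc 0 t := ⟨⟨le_refl 0, zero_le_one⟩, le_refl 0, ht.1⟩
      have htm1 : t ∈ Icc (0 : ℝ) 1 ∩ Icc 0 t := ⟨ht, ht.1, le_refl t⟩
      have htm2 : t ∈ Icc (0 : ℝ) 1 ∩ Icc t 1 := ⟨ht, le_refl t, ht.2⟩
      have h1m : (1 : ℝ) ∈ Icc (0 : ℝ) 1 ∩ Icc t 1 := ⟨⟨zero_le_one, le_refl 1⟩, ht.2, le_refl 1⟩
      have e1 : edist (f 0) (f t) ≤ eVariationOn f (Icc 0 1 ∩ Icc 0 t) :=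
        eVariationOn.edist_le f h0m htm1
      have e2 : edist (f t) (f 1) ≤ eVariationOn f (Icc 0 1 ∩ Icc t 1) :=
        eVariationOn.edist_le f htm2 h1m
      have hsum := eVariationOn.Icc_add_Icc f ht.1 ht.2 ht
      rw [Set.inter_self] at hsum
      have hle : edist (f 0) (f t) + edist (f t) (f 1) ≤ ENNReal.ofReal (dist a b) := by
        rw [← hvar, ← hsum]
        exact add_le_add e1 e2
      rw [hf0, hf1] at hle
      have hge : ENNReal.ofReal (dist a b) ≤ edist a (f t) + edist (f t) b := by
        rw [← edist_dist]
        exact edist_triangle a (f t) b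
      have heq := le_antisymm hle hge
      rw [edist_dist, edist_dist, ← ENNReal.ofReal_add dist_nonneg dist_nonneg] at heq
      exact (ENNReal.ofReal_eq_ofReal_iff (by positivity) dist_nonneg).1 heq
    have hcont : ContinuousOn (fun t => dist a (f t)) (Icc 0 1) := (continuous_const.dist continuous_id).comp_continuousOn hfc
    have hdq : dist a (a + s • (b - a)) = s * ‖b - a‖ := by
      simp [dist_eq_norm', norm_smul, abs_of_pos hs.1]
    have hmem : dist a (a + s • (b - a)) ∈ Icc (dist a (f 0)) (dist a (f 1)) := by
      rw [hf0, hf1, hdq]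
      constructor
      · rw [dist_self]
        exact mul_nonneg hs.1.le (norm_nonneg _)
      · rw [dist_eq_norm']
        nlinarith [hs.2.le, norm_nonneg (b - a)]
    obtain ⟨t, ht, hdist⟩ := intermediate_value_Icc zero_le_one hcont hmem
    have hwb : Wbtw ℝ a (f t) b := dist_add_dist_eq_iff.1 (key t ht)
    have hseg : f t ∈ segment ℝ a b := mem_segment_iff_wbtw.2 hwb
    rw [segment_eq_image' ℝ a b] at hseg
    obtain ⟨u, hu, hfu⟩ := hseg
    have hdist' : dist a (f t) = dist a (a + s • (b - a)) := hdist
    have hfu' : a + u • (b - a) = f t := hfu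
    have hqQ' : a + s • (b - a) ∈ Q := hqQ
    have hdu : dist a (f t) = u * ‖b - a‖ := by
      rw [← hfu']
      simp [dist_eq_norm', norm_smul, abs_of_nonneg hu.1]
    have hus : u = s := by
      have : u * ‖b - a‖ = s * ‖b - a‖ := by rw [← hdu, hdist', hdq]
      exact mul_right_cancel₀ hvne this
    exact hfQ t ht (by rw [← hfu', hus]; exact hqQ')
  · intro h
    refine ⟨fun t => a + t • (b - a), ?_, by simp, by simp, ?_, ?_⟩
    · exact (continuous_const.add (continuous_id.smul continuous_const)).continuousOn
    · rintro t ⟨ht0, ht1⟩ hmem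
      rcases eq_or_lt_of_le ht0 with h0 | h0
      · exact ha (by simpa [← h0] using hmem)
      rcases eq_or_lt_of_le ht1 with h1 | h1
      · exact hb (by simpa [h1] using hmem)
      · have hseg : a + t • (b - a) ∈ openSegment ℝ a b := by
          rw [openSegment_eq_image' ℝ a b]
          exact ⟨t, ⟨h0, h1⟩, rfl⟩
        exact (Set.eq_empty_iff_forall_notMem.1 h _) ⟨hmem, hseg⟩
    · apply le_antisymm
      · have hg : LipschitzWith ‖b - a‖₊ (fun t : ℝ => a + t • (b - a)) := by
          apply LipschitzWith.of_dist_le_mul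
          intro x y
          simp only [dist_eq_norm, add_sub_add_left_eq_sub, ← sub_smul, norm_smul,
            Real.norm_eq_abs, coe_nnnorm, Real.dist_eq]
          rw [mul_comm]
        have hmono : MonotoneOn (id : ℝ → ℝ) (Icc 0 1) := fun x _ y _ h => h
        have hid : eVariationOn (id : ℝ → ℝ) (Icc 0 1) ≤ ENNReal.ofReal 1 := by
          have := hmono.eVariationOn_le (a := 0) (b := 1)
            ⟨le_refl 0, zero_le_one⟩ ⟨zero_le_one, le_refl 1⟩
          simpa using this
        calc eVariationOn (fun t : ℝ => a + t • (b - a)) (Icc 0 1)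
            = eVariationOn ((fun t : ℝ => a + t • (b - a)) ∘ id) (Icc 0 1) := rfl
          _ ≤ ↑‖b - a‖₊ * eVariationOn (id : ℝ → ℝ) (Icc 0 1) :=
              (hg.lipschitzOnWith (s := Icc (0:ℝ) 1)).comp_eVariationOn_le (Set.mapsTo_id _)
          _ ≤ ↑‖b - a‖₊ * ENNReal.ofReal 1 := by gcongr
          _ = ENNReal.ofReal (dist a b) := by
              rw [ENNReal.ofReal_one, mul_one, dist_eq_norm, ← norm_sub_rev,
                ← coe_nnnorm, ENNReal.ofReal_coe_nnreal]
      · have h0 : (0 : ℝ) ∈ Icc (0 : ℝ) 1 := ⟨le_refl 0, zero_le_one⟩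
        have h1 : (1 : ℝ) ∈ Icc (0 : ℝ) 1 := ⟨zero_le_one, le_refl 1⟩
        have := eVariationOn.edist_le (fun t : ℝ => a + t • (b - a)) h0 h1
        simpa [edist_dist] using this
end

section
/- Let E = EuclideanSpace ℝ (Fin n) and let a, a', b, b' ∈ E with a ≠ a' and b ≠ b'. Then the following are equivalent: (1) there exist f, g : ℝ → E, continuous on [0,1], with f 0 = a, g 0 = a', f 1 = b, g 1 = b', f t ≠ g t for all t ∈ [0,1], and such that the path t ↦ ((f t, g t) : WithLp 2 (E × E)) has eVariationOn over Set.Icc 0 1 equal to ENNReal.ofReal (dist ((a,a') : WithLp 2 (E × E)) ((b,b') : WithLp 2 (E × E))); (2) there is no λ < 0 with b − b' = λ•(a − a'). -/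
/-!
A geodesic in a strictly convex space passes through every point of the straight segment
between its endpoints: the variation splits at each time `t` into the lengths before and after
`t`, which forces equality in the triangle inequality through `γ t`, and continuity of `dist (γ 0)
(γ ·)` lets `γ t` reach every distance from `γ 0`. The ℓ² product `E × E` is an inner product
space, so every geodesic from `(a,a')` to `(b,b')` covers the straight segment, which is itself a
geodesic; it meets the diagonal exactly when `b - b'` is a negative multiple of `a - a'`.
-/

open Set AffineMap

theorem edist_add_edist_eq_of_eVariationOn_eq_edist {α E : Type*} [LinearOrder α]
    [PseudoEMetricSpace E] {γ : α → E} {a b t : α}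
    (hvar : eVariationOn γ (Icc a b) = edist (γ a) (γ b)) (ht : t ∈ Icc a b) :
    edist (γ a) (γ t) + edist (γ t) (γ b) = edist (γ a) (γ b) := by
  refine le_antisymm ?_ (edist_triangle _ _ _)
  have hsplit := eVariationOn.Icc_add_Icc γ ht.1 ht.2 (mem_univ t)
  simp only [univ_inter] at hsplit
  calc edist (γ a) (γ t) + edist (γ t) (γ b)
      ≤ eVariationOn γ (Icc a t) + eVariationOn γ (Icc t b) :=
        add_le_add (eVariationOn.edist_le γ (left_mem_Icc.2 ht.1) (right_mem_Icc.2 ht.1))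
          (eVariationOn.edist_le γ (left_mem_Icc.2 ht.2) (right_mem_Icc.2 ht.2))
    _ = edist (γ a) (γ b) := by rw [hsplit, hvar]

theorem segment_subset_image_of_eVariationOn_eq_edist {E : Type*} [NormedAddCommGroup E]
    [NormedSpace ℝ E] [StrictConvexSpace ℝ E] {γ : ℝ → E} {a b : ℝ} (hab : a ≤ b)
    (hγ : ContinuousOn γ (Icc a b)) (hvar : eVariationOn γ (Icc a b) = edist (γ a) (γ b)) :
    segment ℝ (γ a) (γ b) ⊆ γ '' Icc a b := by
  rw [segment_eq_image_lineMap]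
  rintro _ ⟨s, hs, rfl⟩
  set d := dist (γ a) (γ b)
  have hd : 0 ≤ d := dist_nonneg
  have hreach : s * d ∈ Icc (dist (γ a) (γ a)) d := by
    rw [dist_self]
    exact ⟨mul_nonneg hs.1 hd, mul_le_of_le_one_left hd hs.2⟩
  obtain ⟨t, ht, hdist : dist (γ a) (γ t) = s * d⟩ := intermediate_value_Icc hab
    ((continuous_const.dist continuous_id).comp_continuousOn hγ) hreach
  have hsum := edist_add_edist_eq_of_eVariationOn_eq_edist hvar ht
  rw [edist_dist, edist_dist, edist_dist, ← ENNReal.ofReal_add dist_nonneg dist_nonneg,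
    ENNReal.ofReal_eq_ofReal_iff (by positivity) hd] at hsum
  exact ⟨t, ht, eq_lineMap_of_dist_eq_mul_of_dist_eq_mul hdist (by linarith)⟩

theorem eVariationOn_lineMap {E : Type*} [SeminormedAddCommGroup E] [NormedSpace ℝ E]
    (p q : E) : eVariationOn (lineMap p q : ℝ → E) (Icc 0 1) = edist p q := by
  refine le_antisymm ?_ ?_
  · have hid : eVariationOn (id : ℝ → ℝ) (Icc 0 1) = 1 := by simp
    calc eVariationOn (lineMap p q ∘ id : ℝ → E) (Icc 0 1)
        ≤ nndist p q * eVariationOn (id : ℝ → ℝ) (Icc 0 1) :=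
          (lipschitzWith_lineMap p q).lipschitzOnWith.comp_eVariationOn_le (mapsTo_univ _ _)
      _ = edist p q := by rw [hid, mul_one, edist_nndist]
  · simpa using eVariationOn.edist_le (lineMap p q : ℝ → E)
      (left_mem_Icc.2 zero_le_one) (right_mem_Icc.2 zero_le_one)

section Collision

variable {𝕜 V : Type*} [Field 𝕜] [LinearOrder 𝕜] [IsStrictOrderedRing 𝕜] [AddCommGroup V]
  [Module 𝕜 V]

theorem exists_lineMap_eq_zero_iff {u v : V} (hu : u ≠ 0) (hv : v ≠ 0) :
    (∃ t ∈ Icc (0 : 𝕜) 1, lineMap u v t = 0) ↔ ∃ l : 𝕜, l < 0 ∧ v = l • u := by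
  simp only [lineMap_apply_module]
  constructor
  · rintro ⟨t, ⟨ht0, ht1⟩, hzero⟩
    obtain rfl | ht0 := ht0.eq_or_lt
    · simp_all
    obtain rfl | ht1 := ht1.eq_or_lt
    · simp_all
    refine ⟨-((1 - t) / t), neg_neg_of_pos (div_pos (sub_pos.2 ht1) ht0), ?_⟩
    calc v = t⁻¹ • t • v := (inv_smul_smul₀ ht0.ne' v).symm
      _ = -((1 - t) / t) • u := by
        rw [eq_neg_of_add_eq_zero_right hzero, smul_neg, smul_smul, neg_smul, div_eq_inv_mul]
  · rintro ⟨l, hl, rfl⟩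
    have h1l : 0 < 1 - l := by linarith
    refine ⟨(1 - l)⁻¹, ⟨by positivity, inv_le_one_of_one_le₀ (by linarith)⟩, ?_⟩
    rw [smul_smul, ← add_smul]
    convert zero_smul 𝕜 u
    field_simp
    ring

theorem exists_lineMap_eq_lineMap_iff {a a' b b' : V} (ha : a ≠ a') (hb : b ≠ b') :
    (∃ t ∈ Icc (0 : 𝕜) 1, lineMap a b t = lineMap a' b' t) ↔
      ∃ l : 𝕜, l < 0 ∧ b - b' = l • (a - a') := by
  simp_rw [← sub_eq_zero (a := lineMap a b _), ← vsub_eq_sub, lineMap_vsub_lineMap]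
  exact exists_lineMap_eq_zero_iff (sub_ne_zero.2 ha) (sub_ne_zero.2 hb)

end Collision

theorem WithLp.lineMap_toLp_prod {𝕜 E F : Type*} [Ring 𝕜] [AddCommGroup E] [Module 𝕜 E]
    [AddCommGroup F] [Module 𝕜 F] (p : ENNReal) (x x' : E) (y y' : F) (t : 𝕜) :
    lineMap (WithLp.toLp p (x, y)) (WithLp.toLp p (x', y')) t =
      WithLp.toLp p (lineMap x x' t, lineMap y y' t) := by
  simp only [lineMap_apply_module, ← WithLp.toLp_add, ← WithLp.toLp_smul, Prod.smul_mk,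
    Prod.mk_add_mk]

/-- In the ordered configuration space `F(ℝⁿ,2)` with the ℓ² product metric, the pair of
configurations `(a,a')`, `(b,b')` is joined by a geodesic iff the linear motions do not
collide, i.e. iff `b - b'` is not a negative multiple of `a - a'`. -/
theorem exists_geodesic_config_iff_not_collide {n : ℕ}
    (a a' b b' : EuclideanSpace ℝ (Fin n)) (ha : a ≠ a') (hb : b ≠ b') :
    (∃ f g : ℝ → EuclideanSpace ℝ (Fin n),
      ContinuousOn f (Set.Icc 0 1) ∧ ContinuousOn g (Set.Icc 0 1) ∧
      f 0 = a ∧ g 0 = a' ∧ f 1 = b ∧ g 1 = b' ∧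
      (∀ t ∈ Set.Icc (0 : ℝ) 1, f t ≠ g t) ∧
      eVariationOn
        (fun t : ℝ =>
          (WithLp.equiv 2 (EuclideanSpace ℝ (Fin n) × EuclideanSpace ℝ (Fin n))).symm
            (f t, g t))
        (Set.Icc 0 1) =
        ENNReal.ofReal
          (dist
            ((WithLp.equiv 2 (EuclideanSpace ℝ (Fin n) × EuclideanSpace ℝ (Fin n))).symm
              (a, a'))
            ((WithLp.equiv 2 (EuclideanSpace ℝ (Fin n) × EuclideanSpace ℝ (Fin n))).symm
              (b, b')))) ↔
    ¬ ∃ l : ℝ, l < 0 ∧ b - b' = l • (a - a') := by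
  simp only [WithLp.equiv_symm_apply, ← edist_dist, ← exists_lineMap_eq_lineMap_iff ha hb]
  constructor
  · rintro ⟨f, g, hf, hg, rfl, rfl, rfl, rfl, hfg, hvar⟩ ⟨t, ht, hcol⟩
    have hγ : ContinuousOn (fun s => WithLp.toLp 2 (f s, g s)) (Icc 0 1) :=
      (WithLp.prod_continuous_toLp _ _ _).comp_continuousOn (hf.prodMk hg)
    obtain ⟨s, hs, hγs⟩ := segment_subset_image_of_eVariationOn_eq_edist zero_le_one hγ hvar
      (lineMap_mem_segment ℝ (WithLp.toLp 2 (f 0, g 0)) (WithLp.toLp 2 (f 1, g 1)) ht)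
    rw [WithLp.lineMap_toLp_prod, (WithLp.toLp_injective 2).eq_iff, Prod.mk.injEq] at hγs
    exact hfg s hs (by rw [hγs.1, hγs.2, hcol])
  · intro hnoncol
    refine ⟨lineMap a b, lineMap a' b', lineMap_continuous.continuousOn,
      lineMap_continuous.continuousOn, by simp, by simp, by simp, by simp,
      fun t ht hcol => hnoncol ⟨t, ht, hcol⟩, ?_⟩
    simp only [← WithLp.lineMap_toLp_prod]
    exact eVariationOn_lineMap _ _
end

section
/- Let E be a real inner product space and a, a', b, b', w ∈ E with a ≠ a'. Suppose b − b' = λ•(a − a') for some λ < 0, and that w ≠ 0 with ⟪w, b − b'⟫ = 0. Then for every t ∈ [0,1] and every c ∈ ℝ such that (c = 0 → t = 0 ∨ t = 1), we have (1−t)•a + t•b ≠ (1−t)•a' + t•b' + c•w. -/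
open scoped RealInnerProductSpace

/-- If the linear paths from `(a,a')` to `(b,b')` collide (`b - b' = λ•(a - a')`, `λ < 0`),
then perturbing the second path by `c•w` with `w ≠ 0` orthogonal to `b - b'`, `c` vanishing
only at the endpoints, produces collision-free paths. -/
theorem perturbed_second_path_no_collision
    {E : Type*} [NormedAddCommGroup E] [InnerProductSpace ℝ E]
    (a a' b b' w : E) (ha : a ≠ a')
    (hcol : ∃ l : ℝ, l < 0 ∧ b - b' = l • (a - a'))
    (hw : w ≠ 0) (hperp : ⟪w, b - b'⟫ = 0) :
    ∀ t ∈ Set.Icc (0 : ℝ) 1, ∀ c : ℝ, (c = 0 → t = 0 ∨ t = 1) →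
      (1 - t) • a + t • b ≠ (1 - t) • a' + t • b' + c • w := by
  obtain ⟨l, hl, hbb⟩ := hcol
  intro t _ c hc heq
  have key : ((1 - t) + t * l) • (a - a') = c • w := by
    have h2 : c • w = ((1 - t) • a + t • b) - ((1 - t) • a' + t • b') := by
      rw [heq]; abel
    rw [h2, add_smul, mul_smul, ← hbb, smul_sub, smul_sub]; abel
  -- inner product with w
  have hwa : ⟪w, a - a'⟫ = 0 := by
    have : l * ⟪w, a - a'⟫ = 0 := by
      rw [← real_inner_smul_right, ← hbb]; exact hperp
    exact (mul_eq_zero.mp this).resolve_left hl.ne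
  have hinner : c * ⟪w, w⟫ = 0 := by
    have := congrArg (fun x => ⟪w, x⟫) key
    simpa [real_inner_smul_right, hwa] using this.symm
  have hww : ⟪w, w⟫ ≠ 0 := by
    rw [real_inner_self_eq_norm_sq]
    exact pow_ne_zero 2 (norm_ne_zero_iff.mpr hw)
  have hc0 : c = 0 := by
    rcases mul_eq_zero.mp hinner with h | h
    · exact h
    · exact absurd h hww
  have haa : a - a' ≠ 0 := sub_ne_zero.mpr ha
  rcases hc hc0 with rfl | rfl
  · rw [hc0] at key
    simp only [sub_zero, zero_mul, add_zero, one_smul, zero_smul] at key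
    exact haa key
  · rw [hc0] at key
    simp only [sub_self, one_mul, zero_add, zero_smul, smul_eq_zero] at key
    rcases key with h | h
    · exact hl.ne h
    · exact haa h
end

section
/- Let E be a real inner product space and a, a', b, b', w ∈ E with a ≠ a'. Suppose b − b' = λ•(a − a') for some λ < 0, and that w ≠ 0 with ⟪w, a − a'⟫ = 0. Then for every t ∈ [0,1] and every c ∈ ℝ such that (c = 0 → t = 0 ∨ t = 1), we have (1−t)•a + t•b + c•w ≠ (1−t)•a' + t•b' − c•w. -/
open scoped RealInnerProductSpace

/-- If the linear paths from `(a,a')` to `(b,b')` collide (`b - b' = λ•(a - a')`, `λ < 0`),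
then the symmetric two-sided perturbation by `±c•w`, with `w ≠ 0` orthogonal to `a - a'`
and `c` vanishing only at the endpoints, produces collision-free paths. -/
theorem symmetric_perturbation_no_collision
    {E : Type*} [NormedAddCommGroup E] [InnerProductSpace ℝ E]
    (a a' b b' w : E) (ha : a ≠ a')
    (hcol : ∃ l : ℝ, l < 0 ∧ b - b' = l • (a - a'))
    (hw : w ≠ 0) (hperp : ⟪w, a - a'⟫ = 0) :
    ∀ t ∈ Set.Icc (0 : ℝ) 1, ∀ c : ℝ, (c = 0 → t = 0 ∨ t = 1) →
      (1 - t) • a + t • b + c • w ≠ (1 - t) • a' + t • b' - c • w := by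
  rintro t ht c hc heq
  obtain ⟨l, hl, hbb⟩ := hcol
  have hdiff : ((1 - t) + t * l) • (a - a') + (2 * c) • w = 0 := by
    have h0 : ((1 - t) • a + t • b + c • w) - ((1 - t) • a' + t • b' - c • w) = 0 := by
      rw [heq]; abel
    have : (1 - t) • (a - a') + t • (b - b') + (2 * c) • w = 0 := by
      rw [← h0]; simp only [smul_sub]; module
    rw [hbb, smul_smul] at this
    rw [add_smul]
    linear_combination (norm := module) this
  by_cases hc0 : c = 0
  · rcases hc hc0 with rfl | rfl
    · simp [hc0] at hdiff
      exact ha (sub_eq_zero.mp hdiff)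
    · simp [hc0] at hdiff
      rcases hdiff with h | h
      · exact absurd h (ne_of_lt hl)
      · exact ha (sub_eq_zero.mp h)
  · have := congrArg (fun x => ⟪w, x⟫) hdiff
    simp only [inner_add_right, inner_smul_right, hperp, real_inner_self_eq_norm_sq,
      inner_zero_right, mul_zero, zero_add] at this
    have hw2 : (0:ℝ) < ‖w‖ ^ 2 := pow_pos (norm_pos_iff.mpr hw) 2
    have h2c : 2 * c = 0 := by
      rcases mul_eq_zero.mp this with h | h
      · exact h
      · exact absurd h (ne_of_gt hw2)
    exact (mul_ne_zero two_ne_zero hc0) h2c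
end

section
/- Let E be a real inner product space and a, a', b, b' ∈ E. If ‖a − b‖² + ‖a' − b'‖² < ‖a − b'‖² + ‖a' − b‖², then for every t ∈ [0,1], (1−t)•a + t•b ≠ (1−t)•a' + t•b'. -/
/-!
Expanding the squares, the strict inequality says exactly `0 < ⟪a - a', b - b'⟫`. A collision at
time `t` means `(1 - t) • (a - a') + t • (b - b') = 0`, but the inner product of this vector with
`(a - a') + (b - b')` is `(1 - t) ‖a - a'‖² + ⟪a - a', b - b'⟫ + t ‖b - b'‖² > 0`.
-/

open RealInnerProductSpace

section

variable {E : Type*} [NormedAddCommGroup E] [InnerProductSpace ℝ E]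

theorem norm_sub_sq_add_norm_sub_sq_swap (a a' b b' : E) :
    ‖a - b'‖ ^ 2 + ‖a' - b‖ ^ 2 = ‖a - b‖ ^ 2 + ‖a' - b'‖ ^ 2 + 2 * ⟪a - a', b - b'⟫ := by
  simp only [← real_inner_self_eq_norm_sq, inner_sub_left, inner_sub_right, real_inner_comm]
  ring

theorem smul_add_smul_ne_zero_of_inner_pos {u v : E} (huv : 0 < ⟪u, v⟫) {t : ℝ}
    (ht : t ∈ Set.Icc (0 : ℝ) 1) : (1 - t) • u + t • v ≠ 0 := by
  intro h
  have hpair : ⟪(1 - t) • u + t • v, u + v⟫ =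
      (1 - t) * ‖u‖ ^ 2 + ⟪u, v⟫ + t * ‖v‖ ^ 2 := by
    simp only [inner_add_left, inner_add_right, real_inner_smul_left, real_inner_self_eq_norm_sq,
      real_inner_comm u v]
    ring
  rw [h, inner_zero_left] at hpair
  nlinarith [ht.1, ht.2, sq_nonneg ‖u‖, sq_nonneg ‖v‖]

end

/-- If the pairing `(a,b), (a',b')` strictly realizes the minimum,
`‖a-b‖² + ‖a'-b'‖² < ‖a-b'‖² + ‖a'-b‖²`, then the linear motions along this pairing
do not collide. -/
theorem no_collision_of_strict_min_pairing
    {E : Type*} [NormedAddCommGroup E] [InnerProductSpace ℝ E] (a a' b b' : E)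
    (h : ‖a - b‖ ^ 2 + ‖a' - b'‖ ^ 2 < ‖a - b'‖ ^ 2 + ‖a' - b‖ ^ 2) :
    ∀ t ∈ Set.Icc (0 : ℝ) 1, (1 - t) • a + t • b ≠ (1 - t) • a' + t • b' := by
  intro t ht hcollide
  have hinner : 0 < ⟪a - a', b - b'⟫ := by
    linarith [norm_sub_sq_add_norm_sub_sq_swap a a' b b']
  apply smul_add_smul_ne_zero_of_inner_pos hinner ht
  rw [smul_sub, smul_sub, sub_add_sub_comm, hcollide, sub_self]
end

section
/- Let E be a real normed vector space and a, b, w ∈ E. For s ∈ ℝ define f_s : ℝ → E by f_s(t) = (1−t)•a + t•b + (s · Real.sin (π·t))•w. Then the function s ↦ eVariationOn f_s (Set.Icc 0 1) tends to ENNReal.ofReal (dist a b) as s → 0. -/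
/-!
The perturbed path is the segment `t ↦ lineMap a b t` plus `s` times the fixed Lipschitz bump
`t ↦ sin (π t) • w`. Total variation is subadditive and scales by `‖s‖`, so it moves by at most
`‖s‖` times the (finite) variation of the bump, and the segment itself has variation `dist a b`.
-/

open Set Filter Topology
open scoped NNReal

section

variable {α 𝕜 E : Type*} [LinearOrder α] [NormedField 𝕜] [SeminormedAddCommGroup E]

theorem eVariationOn_add_le (f g : α → E) (s : Set α) :
    eVariationOn (f + g) s ≤ eVariationOn f s + eVariationOn g s := by
  refine iSup_le fun ⟨n, u, hu, us⟩ => ?_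
  calc ∑ i ∈ Finset.range n, edist ((f + g) (u (i + 1))) ((f + g) (u i))
      ≤ ∑ i ∈ Finset.range n,
          (edist (f (u (i + 1))) (f (u i)) + edist (g (u (i + 1))) (g (u i))) :=
        Finset.sum_le_sum fun i _ => edist_add_add_le _ _ _ _
    _ ≤ eVariationOn f s + eVariationOn g s := by
        rw [Finset.sum_add_distrib]
        exact add_le_add (eVariationOn.sum_le (f := f) hu us) (eVariationOn.sum_le (f := g) hu us)

variable [NormedSpace 𝕜 E]

theorem eVariationOn_const_smul_le (c : 𝕜) (g : α → E) (s : Set α) :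
    eVariationOn (c • g) s ≤ ‖c‖ₑ * eVariationOn g s :=
  (lipschitzWith_smul c).lipschitzOnWith.comp_eVariationOn_le (mapsTo_univ _ _)

theorem eVariationOn_add_smul_le (f g : α → E) (c : 𝕜) (s : Set α) :
    eVariationOn (f + c • g) s ≤ eVariationOn f s + ‖c‖ₑ * eVariationOn g s :=
  (eVariationOn_add_le f (c • g) s).trans (add_le_add_right (eVariationOn_const_smul_le c g s) _)

theorem tendsto_eVariationOn_add_smul (f : α → E) {g : α → E} {s : Set α}
    (hg : BoundedVariationOn g s) :
    Tendsto (fun c : 𝕜 => eVariationOn (f + c • g) s) (𝓝 0) (𝓝 (eVariationOn f s)) := by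
  have hsmall : Tendsto (fun c : 𝕜 => ‖c‖ₑ * eVariationOn g s) (𝓝 0) (𝓝 0) := by
    simpa using ENNReal.Tendsto.mul_const (continuous_enorm.tendsto' 0 0 enorm_zero) (Or.inr hg)
  -- `f` is recovered from the perturbed path by perturbing back with `-c`.
  have hlower (c : 𝕜) :
      eVariationOn f s - ‖c‖ₑ * eVariationOn g s ≤ eVariationOn (f + c • g) s := by
    rw [tsub_le_iff_right, ← enorm_neg]
    simpa using eVariationOn_add_smul_le (f + c • g) g (-c) s
  refine tendsto_of_tendsto_of_tendsto_of_le_of_le ?_ ?_ hlower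
    (fun c => eVariationOn_add_smul_le f g c s)
  · simpa using ENNReal.Tendsto.sub tendsto_const_nhds hsmall (Or.inr ENNReal.zero_ne_top)
  · simpa using tendsto_const_nhds.add hsmall

end

theorem LipschitzOnWith.eVariationOn_Icc_le {E : Type*} [PseudoEMetricSpace E] {f : ℝ → E}
    {C : ℝ≥0} {a b : ℝ} (hf : LipschitzOnWith C f (Icc a b)) :
    eVariationOn f (Icc a b) ≤ C * ENNReal.ofReal (b - a) := by
  rcases lt_or_ge b a with hba | hab
  · simp [Icc_eq_empty_of_lt hba]
  have hid : eVariationOn id (Icc a b) = ENNReal.ofReal (b - a) := by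
    simpa only [inter_self, id_eq] using
      monotoneOn_id.eVariationOn_eq (left_mem_Icc.2 hab) (right_mem_Icc.2 hab)
  calc eVariationOn f (Icc a b) ≤ C * eVariationOn id (Icc a b) :=
        hf.comp_eVariationOn_le (mapsTo_id _)
    _ = C * ENNReal.ofReal (b - a) := by rw [hid]

theorem eVariationOn_lineMap_Icc_zero_one {V P : Type*} [SeminormedAddCommGroup V]
    [NormedSpace ℝ V] [PseudoMetricSpace P] [NormedAddTorsor V P] (p q : P) :
    eVariationOn (AffineMap.lineMap p q : ℝ → P) (Icc 0 1) = edist p q := by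
  refine le_antisymm ?_ ?_
  · have := (lipschitzWith_lineMap (𝕜 := ℝ) p q).lipschitzOnWith.eVariationOn_Icc_le
      (a := 0) (b := 1)
    rwa [sub_zero, ENNReal.ofReal_one, mul_one, ← edist_nndist] at this
  · simpa using eVariationOn.edist_le (AffineMap.lineMap p q : ℝ → P)
      (left_mem_Icc.2 zero_le_one) (right_mem_Icc.2 zero_le_one)

theorem boundedVariationOn_sin_mul_smul {E : Type*} [SeminormedAddCommGroup E] [NormedSpace ℝ E]
    (k : ℝ) (w : E) (a b : ℝ) :
    BoundedVariationOn (fun t : ℝ => Real.sin (k * t) • w) (Icc a b) := by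
  have hlip : LipschitzWith _ (fun t : ℝ => Real.sin (k * t) • w) :=
    (ContinuousLinearMap.toSpanSingleton ℝ w).lipschitz.comp
      (Real.lipschitzWith_sin.comp (lipschitzWith_smul k))
  simpa using hlip.locallyBoundedVariationOn univ a b (mem_univ a) (mem_univ b)

/-- The lengths of the perturbed linear paths
`f_s(t) = (1-t)•a + t•b + (s·sin(πt))•w` tend to `dist a b` as `s → 0`. -/
theorem length_perturbed_tendsto_dist
    {E : Type*} [NormedAddCommGroup E] [NormedSpace ℝ E] (a b w : E) :
    Filter.Tendsto
      (fun s : ℝ =>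
        eVariationOn
          (fun t : ℝ => (1 - t) • a + t • b + (s * Real.sin (Real.pi * t)) • w)
          (Set.Icc 0 1))
      (nhds 0) (nhds (ENNReal.ofReal (dist a b))) := by
  have h := tendsto_eVariationOn_add_smul (𝕜 := ℝ) (AffineMap.lineMap a b)
    (boundedVariationOn_sin_mul_smul Real.pi w 0 1)
  rw [eVariationOn_lineMap_Icc_zero_one, edist_dist] at h
  refine h.congr fun s => congrArg (eVariationOn · _) (funext fun t => ?_)
  simp [AffineMap.lineMap_apply_module, mul_smul]
end

section
/- Let E be a real inner product space (e.g. EuclideanSpace ℝ (Fin n)), a, b ∈ E, and f : ℝ → E continuous on [0,1] with f 0 = a, f 1 = b, and eVariationOn f (Set.Icc 0 1) = ENNReal.ofReal (dist a b). Then f '' (Set.Icc 0 1) = segment ℝ a b. -/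
/-!
Splitting the variation at `t` and bounding each piece below by its chord gives
`dist a (f t) + dist (f t) b = dist a b`, which in a strictly convex space puts `f t` on the
segment. Conversely, the image is connected and contains `a` and `b`, so by the intermediate value
theorem for `dist a ·` it contains a point of the segment at every distance from `a` in
`[0, dist a b]`, and a point of the segment is determined by that distance.
-/

open Set

section Variation

variable {α : Type*} [LinearOrder α]

theorem edist_add_edist_eq_of_eVariationOn_Icc_eq {β : Type*} [PseudoEMetricSpace β] {f : α → β}
    {s t u : α} (hst : s ≤ t) (htu : t ≤ u) (h : eVariationOn f (Icc s u) = edist (f s) (f u)) :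
    edist (f s) (f t) + edist (f t) (f u) = edist (f s) (f u) := by
  refine le_antisymm ?_ (edist_triangle _ _ _)
  calc edist (f s) (f t) + edist (f t) (f u)
      ≤ eVariationOn f (Icc s t) + eVariationOn f (Icc t u) :=
        add_le_add (eVariationOn.edist_le f (left_mem_Icc.2 hst) (right_mem_Icc.2 hst))
          (eVariationOn.edist_le f (left_mem_Icc.2 htu) (right_mem_Icc.2 htu))
    _ = eVariationOn f (Icc s u) := by
      rw [← eVariationOn.union f (isGreatest_Icc hst) (isLeast_Icc htu),
        Icc_union_Icc_eq_Icc hst htu]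
    _ = edist (f s) (f u) := h

variable {V : Type*} [NormedAddCommGroup V] [NormedSpace ℝ V] [StrictConvexSpace ℝ V]

theorem wbtw_of_eVariationOn_Icc_eq {P : Type*} [MetricSpace P] [NormedAddTorsor V P]
    {f : α → P} {s t u : α} (hst : s ≤ t) (htu : t ≤ u)
    (h : eVariationOn f (Icc s u) = edist (f s) (f u)) :
    Wbtw ℝ (f s) (f t) (f u) := by
  rw [← dist_add_dist_eq_iff]
  have := congrArg ENNReal.toReal (edist_add_edist_eq_of_eVariationOn_Icc_eq hst htu h)
  rwa [ENNReal.toReal_add (edist_ne_top _ _) (edist_ne_top _ _), ← dist_edist, ← dist_edist,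
    ← dist_edist] at this

theorem image_Icc_subset_segment_of_eVariationOn_Icc_eq {f : α → V} {s u : α}
    (h : eVariationOn f (Icc s u) = edist (f s) (f u)) :
    f '' Icc s u ⊆ segment ℝ (f s) (f u) := by
  rintro _ ⟨t, ht, rfl⟩
  exact mem_segment_iff_wbtw.2 (wbtw_of_eVariationOn_Icc_eq ht.1 ht.2 h)

end Variation

theorem IsPreconnected.segment_subset {V : Type*} [NormedAddCommGroup V] [NormedSpace ℝ V]
    [StrictConvexSpace ℝ V] {s : Set V} {a b : V} (hs : IsPreconnected s)
    (hsub : s ⊆ segment ℝ a b) (ha : a ∈ s) (hb : b ∈ s) : segment ℝ a b ⊆ s := by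
  rw [segment_eq_image_lineMap]
  rintro _ ⟨θ, hθ, rfl⟩
  have hθab : θ * dist a b ∈ Icc (dist a a) (dist a b) := by
    rw [dist_self]
    exact ⟨mul_nonneg hθ.1 dist_nonneg, mul_le_of_le_one_left dist_nonneg hθ.2⟩
  obtain ⟨y, hy, hay : dist a y = θ * dist a b⟩ :=
    hs.intermediate_value ha hb (continuous_const.dist continuous_id).continuousOn hθab
  have hyb : dist y b = (1 - θ) * dist a b := by
    linarith [(mem_segment_iff_wbtw.1 (hsub hy)).dist_add_dist]
  rwa [← eq_lineMap_of_dist_eq_mul_of_dist_eq_mul hay hyb]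

/-- In a real inner product space, the image of any geodesic from `a` to `b`
(a continuous path on `[0,1]` whose length equals `dist a b`) is exactly the
segment from `a` to `b`. -/
theorem geodesic_image_eq_segment
    {E : Type*} [NormedAddCommGroup E] [InnerProductSpace ℝ E]
    (a b : E) (f : ℝ → E) (hf : ContinuousOn f (Set.Icc 0 1))
    (h0 : f 0 = a) (h1 : f 1 = b)
    (hlen : eVariationOn f (Set.Icc 0 1) = ENNReal.ofReal (dist a b)) :
    f '' Set.Icc 0 1 = segment ℝ a b := by
  subst h0 h1
  rw [← edist_dist] at hlen
  have hsub := image_Icc_subset_segment_of_eVariationOn_Icc_eq hlen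
  exact hsub.antisymm <| (isPreconnected_Icc.image f hf).segment_subset hsub
    (mem_image_of_mem f (left_mem_Icc.2 zero_le_one))
    (mem_image_of_mem f (right_mem_Icc.2 zero_le_one))
end

section
/- Let E be a real inner product space, Q ⊆ E, and a, b ∈ E ∖ Q with a ≠ b. Suppose q ∈ openSegment ℝ a b with Q ∩ segment ℝ a b = {q}, and let w ∈ E with ‖w‖ = 1 and ⟪w, b − a⟫ = 0. Then for every t ∈ [0,1] and every c ∈ ℝ such that (c = 0 → t = 0 ∨ t = 1) and such that |c| < Metric.infDist q' (segment ℝ a b) for every q' ∈ Q with q' ≠ q, we have (1−t)•a + t•b + c•w ∉ Q. -/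
open scoped RealInnerProductSpace

/-- If exactly one point `q` of `Q` lies on the segment `ab` (and it lies strictly
between `a` and `b`), then the perturbed path `(1-t)•a + t•b + c•w`, with `w` a unit
vector orthogonal to `b - a`, `c` vanishing only at the endpoints, and `|c|` smaller
than the distance from any other point of `Q` to the segment, stays outside `Q`. -/
theorem perturbed_path_avoids_Q
    {E : Type*} [NormedAddCommGroup E] [InnerProductSpace ℝ E]
    (Q : Set E) (a b q w : E) (haQ : a ∉ Q) (hbQ : b ∉ Q) (hab : a ≠ b)
    (hq : q ∈ openSegment ℝ a b) (hQseg : Q ∩ segment ℝ a b = {q})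
    (hw : ‖w‖ = 1) (hperp : ⟪w, b - a⟫ = 0) :
    ∀ t ∈ Set.Icc (0 : ℝ) 1, ∀ c : ℝ, (c = 0 → t = 0 ∨ t = 1) →
      (∀ q' ∈ Q, q' ≠ q → |c| < Metric.infDist q' (segment ℝ a b)) →
      (1 - t) • a + t • b + c • w ∉ Q := by
  intro t ht c hc0 hlt hxQ
  set x := (1 - t) • a + t • b + c • w with hx
  have hpseg : (1 - t) • a + t • b ∈ segment ℝ a b :=
    ⟨1 - t, t, by linarith [ht.2], ht.1, by ring, rfl⟩
  by_cases hxq : x = q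
  · obtain ⟨u, v, hu, hv, huv, hqeq⟩ := hq
    have hdiff : c • w = (v - t) • (b - a) := by
      have : (1 - t) • a + t • b + c • w = u • a + v • b := hxq.trans hqeq.symm
      have hu' : u = 1 - v := by linarith
      rw [hu'] at this
      have h2 : c • w = ((1 - v) • a + v • b) - ((1 - t) • a + t • b) := by
        rw [← this]; abel
      rw [h2]; module
    have hc : c = 0 := by
      have h1 : ⟪w, c • w⟫ = c := by
        rw [real_inner_smul_right, real_inner_self_eq_norm_sq, hw]; ring
      have h2 : ⟪w, (v - t) • (b - a)⟫ = 0 := by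
        rw [real_inner_smul_right, hperp]; ring
      rw [hdiff, h2] at h1; exact h1.symm
    rcases hc0 hc with h0 | h1
    · apply haQ
      have : x = a := by rw [hx, hc, h0]; simp
      rwa [this] at hxQ
    · apply hbQ
      have : x = b := by rw [hx, hc, h1]; simp
      rwa [this] at hxQ
  · have hlt' := hlt x hxQ hxq
    have hle : Metric.infDist x (segment ℝ a b) ≤ |c| := by
      have hd : dist x ((1 - t) • a + t • b) = |c| := by
        rw [dist_eq_norm]
        have : x - ((1 - t) • a + t • b) = c • w := by rw [hx]; abel
        rw [this, norm_smul, hw, Real.norm_eq_abs, mul_one]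
      rw [← hd]
      exact Metric.infDist_le_dist_of_mem hpseg
    linarith
end
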